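/- arXiv:1505.05064 — 3 statements merged into one kernel-verified Lean document; each statement's English description precedes it below -/
import Mathlib

section
/- Let H be a subgroup of GL_m(ℤ). Suppose there exists a positive definite Hermitian matrix P ∈ ℂ^{m×m} such that every element h ∈ H, regarded as a complex matrix, satisfies h^* · P · h = P (where h^* denotes the conjugate transpose). Then H is finite. -/
open Matrix
open scoped ComplexOrder

/-! Write `P = B^* B` with `B` invertible. By the C⋆-identity `‖x‖² = ‖x^* x‖` of the operator
norm, `h^* P h = P` gives `‖B h‖ = ‖B‖`, so `‖h‖ ≤ ‖B⁻¹‖ ‖B‖` for every `h ∈ H`.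
The entries of the integer matrices in `H` are therefore bounded, and there are only finitely many
integer matrices with bounded entries. -/

section CStarRing

variable {A : Type*}

lemma norm_mul_eq_of_star_mul_mul_eq [NonUnitalNormedRing A] [StarRing A] [CStarRing A]
    {b h : A} (hh : star h * (star b * b) * h = star b * b) : ‖b * h‖ = ‖b‖ := by
  have : ‖b * h‖ * ‖b * h‖ = ‖b‖ * ‖b‖ := by
    rw [← CStarRing.norm_star_mul_self, ← CStarRing.norm_star_mul_self, star_mul, ← hh]
    simp only [mul_assoc]
  exact (mul_self_inj (norm_nonneg _) (norm_nonneg _)).mp this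

lemma Units.norm_le_of_star_mul_mul_eq [NormedRing A] [StarRing A] [CStarRing A]
    {b : Aˣ} {h : A} (hh : star h * (star ↑b * ↑b) * h = star ↑b * ↑b) :
    ‖h‖ ≤ ‖(↑b⁻¹ : A)‖ * ‖(b : A)‖ :=
  calc ‖h‖ = ‖(↑b⁻¹ : A) * (b * h)‖ := by rw [Units.inv_mul_cancel_left]
    _ ≤ ‖(↑b⁻¹ : A)‖ * ‖b * h‖ := norm_mul_le _ _
    _ = ‖(↑b⁻¹ : A)‖ * ‖(b : A)‖ := by rw [norm_mul_eq_of_star_mul_mul_eq hh]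

end CStarRing

namespace Matrix

variable {𝕜 m n : Type*} [RCLike 𝕜] [Fintype m] [Fintype n] [DecidableEq n]

open scoped Matrix.Norms.L2Operator in
lemma norm_entry_le_l2_opNorm (M : Matrix m n 𝕜) (i : m) (j : n) : ‖M i j‖ ≤ ‖M‖ :=
  calc ‖M i j‖ ≤ ‖WithLp.toLp 2 (M.col j)‖ := PiLp.norm_apply_le (WithLp.toLp 2 (M.col j)) i
    _ ≤ ‖M‖ * ‖EuclideanSpace.single j (1 : 𝕜)‖ := by
      simpa using M.l2_opNorm_mulVec (EuclideanSpace.single j 1)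
    _ = ‖M‖ := by simp

open scoped MatrixOrder in
lemma PosDef.exists_units_star_mul_self_eq {P : Matrix n n 𝕜} (hP : P.PosDef) :
    ∃ B : (Matrix n n 𝕜)ˣ, star (B : Matrix n n 𝕜) * B = P := by
  refine ⟨(CFC.isUnit_sqrt_iff_isStrictlyPositive.mpr hP.isStrictlyPositive).unit, ?_⟩
  rw [IsUnit.unit_spec, (CFC.sqrt_nonneg P).isSelfAdjoint.star_eq,
    CFC.sqrt_mul_sqrt_self P hP.posSemidef.nonneg]

open scoped Matrix.Norms.L2Operator in
lemma PosDef.exists_forall_norm_entry_le_of_conjTranspose_mul_mul_eq {P : Matrix n n 𝕜}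
    (hP : P.PosDef) : ∃ C, ∀ M : Matrix n n 𝕜, Mᴴ * P * M = P → ∀ i j, ‖M i j‖ ≤ C := by
  obtain ⟨B, rfl⟩ := hP.exists_units_star_mul_self_eq
  exact ⟨_, fun M hM i j =>
    (M.norm_entry_le_l2_opNorm i j).trans (Units.norm_le_of_star_mul_mul_eq hM)⟩

end Matrix

lemma Matrix.finite_setOf_forall_norm_entry_le {m n : Type*} [Finite m] [Finite n] (C : ℝ) :
    {A : Matrix m n ℤ | ∀ i j, ‖A i j‖ ≤ C}.Finite :=
  (Set.Finite.pi fun _ => Set.Finite.pi fun _ =>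
    (isCompact_closedBall (0 : ℤ) C).finite_of_discrete).subset fun A hA =>
      Set.mem_univ_pi.mpr fun i => Set.mem_univ_pi.mpr fun j => by simpa using hA i j

/-- Let `H` be a subgroup of `GL_m(ℤ)`. If there is a positive definite Hermitian matrix
`P ∈ ℂ^{m×m}` with `h^* · P · h = P` for every `h ∈ H` (regarded as a complex matrix),
then `H` is finite. -/
theorem stmt_2 (m : ℕ) (H : Subgroup (GL (Fin m) ℤ))
    (P : Matrix (Fin m) (Fin m) ℂ) (hP : P.PosDef)
    (hinv : ∀ h : GL (Fin m) ℤ, h ∈ H →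
      ((h : Matrix (Fin m) (Fin m) ℤ).map (fun x : ℤ => (x : ℂ)))ᴴ * P *
        ((h : Matrix (Fin m) (Fin m) ℤ).map (fun x : ℤ => (x : ℂ))) = P) :
    (H : Set (GL (Fin m) ℤ)).Finite := by
  obtain ⟨C, hC⟩ := hP.exists_forall_norm_entry_le_of_conjTranspose_mul_mul_eq
  refine ((Matrix.finite_setOf_forall_norm_entry_le C).preimage
    Units.val_injective.injOn).subset fun g hg i j => ?_
  simpa [Int.norm_eq_abs] using hC _ (hinv g hg) i j
end

section
/- Let n ≥ 5 be an integer. There exist natural numbers m_0, m_1, m_2, m_3, n_0, n_1, n_2 with 1 ≤ m_j ≤ n−1 and 1 ≤ n_i ≤ n−1 for all i, j, with m_0 + m_1 + m_2 + m_3 = n and n_0 + n_1 + n_2 = n, and such that each m_j (j = 0,1,2,3), each n_i (i = 0,1,2), and each of m_0 + m_3, m_1 + m_3, m_2 + m_3 is coprime to n (equivalently, is a unit in ℤ/nℤ), if and only if gcd(n, 6) = 1. -/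
/-!
If `2 ∣ n`, the three `nᵢ` are odd and cannot sum to `n`. If `3 ∣ n`, write `d` for the residue of
`m₃` mod 3: each `mⱼ` avoids both `0` and `-d`, hence equals `d`, and the `mⱼ` sum to `4d = d ≠ 0`.
Conversely, when `gcd(n, 6) = 1` the data `(1, 1, n - 3, 1; 1, 1, n - 2)` works.
-/

namespace Nat

theorem gcd_six_eq_one_iff {n : ℕ} : n.gcd 6 = 1 ↔ ¬ 2 ∣ n ∧ ¬ 3 ∣ n := by
  rw [← Coprime, coprime_comm, show (6 : ℕ) = 2 * 3 from rfl, coprime_mul_iff_left,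
    prime_two.coprime_iff_not_dvd, prime_three.coprime_iff_not_dvd]

theorem natCast_zmod_ne_zero_of_coprime {a n p : ℕ} (h : a.Coprime n) (hpn : p ∣ n)
    (hp : p ≠ 1) : (a : ZMod p) ≠ 0 := by
  rw [Ne, ZMod.natCast_eq_zero_iff]
  exact fun hpa => hp (eq_one_of_dvd_coprimes h hpa hpn)

theorem not_two_dvd_of_add_add_eq_of_coprime {a b c n : ℕ} (hsum : a + b + c = n)
    (ha : a.Coprime n) (hb : b.Coprime n) (hc : c.Coprime n) : ¬ 2 ∣ n := by
  intro h2
  have key : ∀ x y z : ZMod 2, x ≠ 0 → y ≠ 0 → z ≠ 0 → x + y + z ≠ 0 := by decide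
  refine key a b c (natCast_zmod_ne_zero_of_coprime ha h2 (by decide))
    (natCast_zmod_ne_zero_of_coprime hb h2 (by decide))
    (natCast_zmod_ne_zero_of_coprime hc h2 (by decide)) ?_
  rw [← ZMod.natCast_eq_zero_iff] at h2
  exact_mod_cast hsum ▸ h2

theorem not_three_dvd_of_add_add_add_eq_of_coprime {a b c d n : ℕ} (hsum : a + b + c + d = n)
    (ha : a.Coprime n) (hb : b.Coprime n) (hc : c.Coprime n) (hd : d.Coprime n)
    (had : (a + d).Coprime n) (hbd : (b + d).Coprime n) (hcd : (c + d).Coprime n) :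
    ¬ 3 ∣ n := by
  intro h3
  have key : ∀ x y z w : ZMod 3, x ≠ 0 → y ≠ 0 → z ≠ 0 → w ≠ 0 →
      x + w ≠ 0 → y + w ≠ 0 → z + w ≠ 0 → x + y + z + w ≠ 0 := by decide
  have unit {x : ℕ} (hx : x.Coprime n) : (x : ZMod 3) ≠ 0 :=
    natCast_zmod_ne_zero_of_coprime hx h3 (by decide)
  refine key a b c d (unit ha) (unit hb) (unit hc) (unit hd)
    (by exact_mod_cast unit had) (by exact_mod_cast unit hbd) (by exact_mod_cast unit hcd) ?_
  rw [← ZMod.natCast_eq_zero_iff] at h3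
  exact_mod_cast hsum ▸ h3

end Nat

/-- For an integer `n ≥ 5`, natural numbers `m₀, m₁, m₂, m₃, n₀, n₁, n₂` with
`1 ≤ mⱼ ≤ n-1`, `1 ≤ nᵢ ≤ n-1`, `m₀ + m₁ + m₂ + m₃ = n`, `n₀ + n₁ + n₂ = n`, and such that
each `mⱼ`, each `nᵢ` and each of `m₀+m₃, m₁+m₃, m₂+m₃` is coprime to `n`, exist if and
only if `gcd(n, 6) = 1`. -/
theorem stmt_4 (n : ℕ) (hn : 5 ≤ n) :
    (∃ m0 m1 m2 m3 n0 n1 n2 : ℕ,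
      (1 ≤ m0 ∧ m0 ≤ n - 1) ∧ (1 ≤ m1 ∧ m1 ≤ n - 1) ∧ (1 ≤ m2 ∧ m2 ≤ n - 1) ∧
      (1 ≤ m3 ∧ m3 ≤ n - 1) ∧
      (1 ≤ n0 ∧ n0 ≤ n - 1) ∧ (1 ≤ n1 ∧ n1 ≤ n - 1) ∧ (1 ≤ n2 ∧ n2 ≤ n - 1) ∧
      m0 + m1 + m2 + m3 = n ∧ n0 + n1 + n2 = n ∧
      Nat.Coprime m0 n ∧ Nat.Coprime m1 n ∧ Nat.Coprime m2 n ∧ Nat.Coprime m3 n ∧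
      Nat.Coprime n0 n ∧ Nat.Coprime n1 n ∧ Nat.Coprime n2 n ∧
      Nat.Coprime (m0 + m3) n ∧ Nat.Coprime (m1 + m3) n ∧ Nat.Coprime (m2 + m3) n) ↔
    Nat.gcd n 6 = 1 := by
  rw [Nat.gcd_six_eq_one_iff]
  constructor
  · rintro ⟨m0, m1, m2, m3, n0, n1, n2, -, -, -, -, -, -, -, hmsum, hnsum, c0, c1, c2, c3,
      cn0, cn1, cn2, d0, d1, d2⟩
    exact ⟨Nat.not_two_dvd_of_add_add_eq_of_coprime hnsum cn0 cn1 cn2,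
      Nat.not_three_dvd_of_add_add_add_eq_of_coprime hmsum c0 c1 c2 c3 d0 d1 d2⟩
  · rintro ⟨h2, h3⟩
    have c2 : Nat.Coprime 2 n := (Nat.prime_two.coprime_iff_not_dvd).2 h2
    have c3 : Nat.Coprime 3 n := (Nat.prime_three.coprime_iff_not_dvd).2 h3
    have c1 := Nat.coprime_one_left n
    have hm2 : Nat.Coprime (n - 3) n := (Nat.coprime_self_sub_left (by omega)).2 c3
    have hn2 : Nat.Coprime (n - 2) n := (Nat.coprime_self_sub_left (by omega)).2 c2
    have hm23 : Nat.Coprime (n - 3 + 1) n := by rwa [show n - 3 + 1 = n - 2 by omega]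
    exact ⟨1, 1, n - 3, 1, 1, 1, n - 2, by omega, by omega, by omega, by omega, by omega,
      by omega, by omega, by omega, by omega, c1, c1, hm2, c1, c1, c1, hn2, c2, c2, hm23⟩
end

section
/- Let n ≥ 5 be an integer with gcd(n, 6) = 1, and let m_0, m_1, m_2, m_3 be natural numbers with 1 ≤ m_j ≤ n−1 for each j, m_0 + m_1 + m_2 + m_3 = n, each m_j coprime to n, and m_0 + m_3 coprime to n. Then there exists an integer j with 1 ≤ j ≤ n−1 and gcd(j, n) = 1 such that [j·m_0]_n + [j·m_1]_n + [j·m_2]_n + [j·m_3]_n = 2n. -/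
/-! Choose `j ≡ -(m₀ + m₃)⁻¹ (mod n)`. Then `j(m₀ + m₃) ≡ -1` and, since `m₁ + m₂ = n - (m₀ + m₃)`,
`j(m₁ + m₂) ≡ 1`. A sum of two residues mod `n` is at most `2n - 2`, so `[j m₀]ₙ + [j m₃]ₙ = n - 1`;
as `j m₁` and `j m₂` are units, their residues are nonzero, so `[j m₁]ₙ + [j m₂]ₙ ≠ 1` and it
equals `n + 1`. -/

lemma Nat.mod_pos_of_coprime {a n : ℕ} (hn : 1 < n) (h : a.Coprime n) : 0 < a % n := by
  refine Nat.pos_of_ne_zero fun h0 => ?_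
  have : a.gcd n = n := Nat.gcd_eq_right (Nat.dvd_of_mod_eq_zero h0)
  rw [h] at this
  omega

lemma Nat.mod_add_mod_eq_of_add_mod_eq_pred {a b n : ℕ} (h : (a + b) % n = n - 1) :
    a % n + b % n = n - 1 := by
  rcases n.eq_zero_or_pos with rfl | hn
  · simp_all
  have := Nat.add_mod_add_ite a b n
  have := Nat.mod_lt a hn
  have := Nat.mod_lt b hn
  split_ifs at * <;> omega

lemma Nat.mod_add_mod_eq_of_add_mod_eq_one {a b n : ℕ} (ha : 0 < a % n) (hb : 0 < b % n)
    (h : (a + b) % n = 1) : a % n + b % n = n + 1 := by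
  rcases n.eq_zero_or_pos with rfl | hn
  · simp_all
  have := Nat.add_mod_add_ite a b n
  split_ifs at * <;> omega

lemma Nat.mod_eq_pred_of_cast_eq_neg_one {n x : ℕ} [NeZero n] (h : (x : ZMod n) = -1) :
    x % n = n - 1 := by
  obtain ⟨k, rfl⟩ := Nat.exists_eq_succ_of_ne_zero (NeZero.ne n)
  rw [← ZMod.val_natCast, h, ZMod.val_neg_one, Nat.succ_sub_one]

lemma Nat.mod_eq_one_of_cast_eq_one {n x : ℕ} [Fact (1 < n)] (h : (x : ZMod n) = 1) :
    x % n = 1 := by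
  rw [← ZMod.val_natCast, h, ZMod.val_one]

lemma ZMod.exists_coprime_cast_mul_eq_neg_one {n a : ℕ} [NeZero n] (ha : a.Coprime n) :
    ∃ j < n, j.Coprime n ∧ ((j * a : ℕ) : ZMod n) = -1 := by
  set u : (ZMod n)ˣ := -(ZMod.unitOfCoprime a ha)⁻¹
  refine ⟨(u : ZMod n).val, ZMod.val_lt _, ZMod.val_coe_unit_coprime u, ?_⟩
  rw [Nat.cast_mul, ZMod.natCast_zmod_val, Units.val_neg, neg_mul,
    ← ZMod.coe_unitOfCoprime a ha, Units.inv_mul]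

theorem stmt_5_general (n m0 m1 m2 m3 : ℕ) (hn : 5 ≤ n)
    (hsum : m0 + m1 + m2 + m3 = n)
    (hc1 : Nat.Coprime m1 n)
    (hc2 : Nat.Coprime m2 n)
    (hc03 : Nat.Coprime (m0 + m3) n) :
    ∃ j : ℕ, 1 ≤ j ∧ j ≤ n - 1 ∧ Nat.Coprime j n ∧
      (j * m0) % n + (j * m1) % n + (j * m2) % n + (j * m3) % n = 2 * n := by
  have hn1 : 1 < n := by omega
  have : NeZero n := ⟨by omega⟩
  have : Fact (1 < n) := ⟨hn1⟩
  obtain ⟨j, hjn, hj, hj03⟩ := ZMod.exists_coprime_cast_mul_eq_neg_one hc03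
  have hj12 : ((j * (m1 + m2) : ℕ) : ZMod n) = 1 := by
    have hm12 : ((m1 + m2 : ℕ) : ZMod n) = -((m0 + m3 : ℕ) : ZMod n) := by
      rw [eq_neg_iff_add_eq_zero, ← Nat.cast_add, ← ZMod.natCast_self n, ← hsum]
      ring_nf
    rw [Nat.cast_mul, hm12, mul_neg, ← Nat.cast_mul, hj03, neg_neg]
  have hj0 : j ≠ 0 := by
    rintro rfl
    rw [Nat.coprime_zero_left] at hj
    omega
  have h03 := Nat.mod_add_mod_eq_of_add_mod_eq_pred
    (a := j * m0) (b := j * m3) (by rw [← mul_add]; exact Nat.mod_eq_pred_of_cast_eq_neg_one hj03)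
  have h12 := Nat.mod_add_mod_eq_of_add_mod_eq_one
    (Nat.mod_pos_of_coprime hn1 (hj.mul_left hc1)) (Nat.mod_pos_of_coprime hn1 (hj.mul_left hc2))
    (by rw [← mul_add]; exact Nat.mod_eq_one_of_cast_eq_one hj12)
  exact ⟨j, by omega, by omega, hj, by omega⟩

/-- Let `n ≥ 5` with `gcd(n,6) = 1` and `m₀, m₁, m₂, m₃` natural numbers with
`1 ≤ mⱼ ≤ n-1`, `m₀ + m₁ + m₂ + m₃ = n`, each `mⱼ` coprime to `n`, and `m₀ + m₃` coprime
to `n`. Then there is `1 ≤ j ≤ n-1` coprime to `n` with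
`[j·m₀]ₙ + [j·m₁]ₙ + [j·m₂]ₙ + [j·m₃]ₙ = 2n`. -/
theorem stmt_5 (n m0 m1 m2 m3 : ℕ) (hn : 5 ≤ n) (h6 : Nat.gcd n 6 = 1)
    (hm0 : 1 ≤ m0 ∧ m0 ≤ n - 1) (hm1 : 1 ≤ m1 ∧ m1 ≤ n - 1)
    (hm2 : 1 ≤ m2 ∧ m2 ≤ n - 1) (hm3 : 1 ≤ m3 ∧ m3 ≤ n - 1)
    (hsum : m0 + m1 + m2 + m3 = n)
    (hc0 : Nat.Coprime m0 n) (hc1 : Nat.Coprime m1 n)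
    (hc2 : Nat.Coprime m2 n) (hc3 : Nat.Coprime m3 n)
    (hc03 : Nat.Coprime (m0 + m3) n) :
    ∃ j : ℕ, 1 ≤ j ∧ j ≤ n - 1 ∧ Nat.Coprime j n ∧
      (j * m0) % n + (j * m1) % n + (j * m2) % n + (j * m3) % n = 2 * n :=
  stmt_5_general n m0 m1 m2 m3 hn hsum hc1 hc2 hc03
end
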